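/- Let 0 < q < 1, r ≥ 1, n ≥ 0, and let w₁, w₂ be odd positive integers. Define the q-analogue of alternating power sums T_{n,i,q}^{(r)}(w) = Σ_{j₁,…,j_r=0}^{w-1} (-1)^{j₁+⋯+j_r} q^{(n-i)(j₁+⋯+j_r)} [j₁+⋯+j_r]_q^{i}. Then Σ_{i=0}^{n} C(n,i) [w₁]_q^{n-i} [w₂]_q^{i} T_{n,i,q^{w₂}}^{(r)}(w₁) E_{n-i, q^{w₁}}^{(r)}(w₂ x) = Σ_{i=0}^{n} C(n,i) [w₁]_q^{i} [w₂]_q^{n-i} T_{n,i,q^{w₁}}^{(r)}(w₂) E_{n-i, q^{w₂}}^{(r)}(w₁ x). -/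

import Mathlib

noncomputable def qNum (q x : ℝ) : ℝ := (1 - q ^ x) / (1 - q)

/-- Closed form of the higher-order `q`-Euler polynomial. -/
noncomputable def qEuler (q : ℝ) (r n : ℕ) (x : ℝ) : ℝ :=
  (1 / (1 - q)) ^ n *
    ∑ l ∈ Finset.range (n + 1),
      (n.choose l : ℝ) * (-1) ^ l * q ^ ((l : ℝ) * x) * (2 / (1 + q ^ l)) ^ r

/-- The `q`-analogue of higher-order alternating power sums. -/
noncomputable def T (q : ℝ) (r n i w : ℕ) : ℝ :=
  ∑ j ∈ Fintype.piFinset fun _ : Fin r => Finset.range w,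
    (-1 : ℝ) ^ (∑ l, j l) * q ^ ((n - i) * ∑ l, j l) * qNum q ((∑ l, j l : ℕ) : ℝ) ^ i

/-!
Expanding `T` and the closed form of `qEuler`, the sum over `i` collapses by
`∑ i, C(n,i) C(n-i,l) (1-u)^i u^(n-i) = C(n,l) u^l` (the addition theorem of the `q`-Euler
polynomials), and the sum over `j ∈ [0,w₁)^r` factors as the `r`-th power of an alternating
geometric sum. The left side becomes `(1-q)^(-n) ∑ l, C(n,l) (-1)^l q^(w₁w₂lx) F_l^r` with
`F_l = 2/(1+q^(lw₁)) ∑_{t<w₁} (-q^(lw₂))^t = 2(1+q^(lw₁w₂)) / ((1+q^(lw₁))(1+q^(lw₂)))`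
for odd `w₁`, which is symmetric in `w₁` and `w₂`.
-/

open Finset

theorem Nat.choose_mul_choose_sub_comm (n i l : ℕ) :
    n.choose i * (n - i).choose l = n.choose l * (n - l).choose i := by
  have vanish : ∀ a b, n < a + b → n.choose a * (n - a).choose b = 0 := fun a b h => by
    rcases le_or_gt a n with ha | ha
    · simp [Nat.choose_eq_zero_of_lt (by omega : n - a < b)]
    · simp [Nat.choose_eq_zero_of_lt ha]
  rcases le_or_gt (i + l) n with h | h
  · rw [← Nat.choose_symm (by omega : i ≤ n), Nat.choose_mul (by omega),
      Nat.choose_symm_of_eq_add (by omega : n - l = n - i - l + i)]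
  · rw [vanish i l h, vanish l i (by omega)]

theorem sum_choose_mul_choose_sub_mul_pow {R : Type*} [CommSemiring R] (a b : R) {n l : ℕ}
    (hl : l ≤ n) :
    ∑ i ∈ range (n + 1), (n.choose i * (n - i).choose l : R) * a ^ i * b ^ (n - i) =
      n.choose l * b ^ l * (a + b) ^ (n - l) := by
  simp_rw [← Nat.cast_mul, Nat.choose_mul_choose_sub_comm, add_pow, mul_sum]
  rw [← sum_subset (range_subset_range.2 (by omega : n - l + 1 ≤ n + 1))]
  · refine sum_congr rfl fun i hi => ?_
    have hi : i ≤ n - l := Nat.lt_succ_iff.1 (mem_range.1 hi)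
    rw [show n - i = l + (n - l - i) by omega, pow_add]
    push_cast
    ring
  · intro i _ hi
    rw [mem_range, not_lt] at hi
    simp [Nat.choose_eq_zero_of_lt (by omega : n - l < i)]

theorem sum_choose_pow_mul_sum_choose {R : Type*} [CommRing R] (u : R) (c : ℕ → R) (n : ℕ) :
    ∑ i ∈ range (n + 1), (n.choose i : R) * (1 - u) ^ i * u ^ (n - i) *
        ∑ l ∈ range (n + 1), ((n - i).choose l : R) * c l =
      ∑ l ∈ range (n + 1), (n.choose l : R) * u ^ l * c l := by
  simp_rw [mul_sum]
  rw [sum_comm]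
  refine sum_congr rfl fun l hl => ?_
  have := sum_choose_mul_choose_sub_mul_pow (1 - u) u (Nat.lt_succ_iff.1 (mem_range.1 hl))
  rw [sub_add_cancel, one_pow, mul_one] at this
  rw [← this, sum_mul]
  exact sum_congr rfl fun i _ => by ring

theorem sum_piFinset_pow_sum {R : Type*} [CommSemiring R] (a : R) (r : ℕ) (s : Finset ℕ) :
    ∑ j ∈ Fintype.piFinset (fun _ : Fin r => s), a ^ (∑ t, j t) = (∑ t ∈ s, a ^ t) ^ r := by
  rw [← Fin.prod_const, prod_univ_sum]
  simp only [prod_pow_eq_pow_sum]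

theorem Odd.geom_sum_neg_mul {R : Type*} [CommRing R] {w : ℕ} (hw : Odd w) (a : R) :
    (∑ t ∈ range w, (-a) ^ t) * (1 + a) = 1 + a ^ w := by
  linear_combination -geom_sum_mul (-a) w - hw.neg_pow a

theorem qNum_natCast_mul_qNum_pow {q : ℝ} {w : ℕ} (hw : q ^ w ≠ 1) (s : ℕ) :
    qNum q w * qNum (q ^ w) s = qNum q (w * s : ℕ) := by
  have : 1 - q ^ w ≠ 0 := sub_ne_zero.2 hw.symm
  simp only [qNum, Real.rpow_natCast, ← pow_mul]
  field_simp

theorem qNum_natCast_mul_one_div {q : ℝ} {w : ℕ} (hw : q ^ w ≠ 1) :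
    qNum q w * (1 / (1 - q ^ w)) = 1 / (1 - q) := by
  have : 1 - q ^ w ≠ 0 := sub_ne_zero.2 hw.symm
  rw [qNum, Real.rpow_natCast]
  field_simp

theorem qEuler_eq_sum_range {m N : ℕ} (h : m ≤ N) (q : ℝ) (r : ℕ) (x : ℝ) :
    qEuler q r m x = (1 / (1 - q)) ^ m * ∑ l ∈ range (N + 1),
      (m.choose l : ℝ) * (-1) ^ l * q ^ ((l : ℝ) * x) * (2 / (1 + q ^ l)) ^ r := by
  rw [qEuler, ← sum_subset (range_subset_range.2 (by omega : m + 1 ≤ N + 1))]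
  intro l _ hl
  rw [mem_range, not_lt] at hl
  simp [Nat.choose_eq_zero_of_lt (by omega : m < l)]

theorem qNum_pow_mul_T {q : ℝ} {w : ℕ} (hw : q ^ w ≠ 1) (r n i m : ℕ) :
    qNum q w ^ i * T (q ^ w) r n i m =
      (1 / (1 - q)) ^ i * ∑ j ∈ Fintype.piFinset (fun _ : Fin r => range m),
        (-1) ^ (∑ t, j t) * (1 - q ^ (w * ∑ t, j t)) ^ i * (q ^ (w * ∑ t, j t)) ^ (n - i) := by
  rw [T, mul_sum, mul_sum]
  refine sum_congr rfl fun j _ => ?_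
  calc qNum q w ^ i * ((-1) ^ (∑ t, j t) * (q ^ w) ^ ((n - i) * ∑ t, j t) *
          qNum (q ^ w) (∑ t, j t : ℕ) ^ i)
      = (-1) ^ (∑ t, j t) * (q ^ (w * ∑ t, j t)) ^ (n - i) *
          (qNum q w * qNum (q ^ w) (∑ t, j t : ℕ)) ^ i := by
        rw [← pow_mul, ← pow_mul, mul_pow]; ring_nf
    _ = _ := by
        rw [qNum_natCast_mul_qNum_pow hw, qNum, Real.rpow_natCast, div_eq_mul_one_div, mul_pow]
        ring

theorem qNum_pow_mul_qEuler {q : ℝ} (hq : 0 ≤ q) {w : ℕ} (hw : q ^ w ≠ 1) (r : ℕ) {m N : ℕ}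
    (h : m ≤ N) (y : ℝ) :
    qNum q w ^ m * qEuler (q ^ w) r m y = (1 / (1 - q)) ^ m * ∑ l ∈ range (N + 1),
      (m.choose l : ℝ) * ((-1) ^ l * q ^ ((w * l : ℝ) * y) * (2 / (1 + (q ^ l) ^ w)) ^ r) := by
  rw [qEuler_eq_sum_range h, ← mul_assoc, ← mul_pow, qNum_natCast_mul_one_div hw]
  refine congrArg _ (sum_congr rfl fun l _ => ?_)
  rw [← Real.rpow_natCast q w, ← Real.rpow_mul hq, Real.rpow_natCast, ← pow_mul, ← pow_mul,
    mul_comm l w]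
  ring_nf

theorem sum_piFinset_mul_sum_choose_pow {R : Type*} [CommRing R] (a : R) (c : ℕ → R)
    (r m n w : ℕ) :
    ∑ j ∈ Fintype.piFinset (fun _ : Fin r => range m), (-1) ^ (∑ t, j t) *
        ∑ l ∈ range (n + 1), (n.choose l : R) * (a ^ (w * ∑ t, j t)) ^ l * c l =
      ∑ l ∈ range (n + 1), (n.choose l : R) * c l * (∑ t ∈ range m, (-(a ^ l) ^ w) ^ t) ^ r := by
  simp_rw [← sum_piFinset_pow_sum, mul_sum]
  rw [sum_comm]
  refine sum_congr rfl fun l _ => sum_congr rfl fun j _ => ?_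
  rw [neg_pow, ← mul_sum]
  ring

theorem sum_qNum_T_qEuler {q : ℝ} (hq : 0 ≤ q) {w₁ w₂ : ℕ} (h₁ : q ^ w₁ ≠ 1) (h₂ : q ^ w₂ ≠ 1)
    (r n : ℕ) (x : ℝ) :
    ∑ i ∈ range (n + 1),
        (n.choose i : ℝ) * qNum q (w₁ : ℝ) ^ (n - i) * qNum q (w₂ : ℝ) ^ i *
          T (q ^ w₂) r n i w₁ * qEuler (q ^ w₁) r (n - i) ((w₂ : ℝ) * x) =
      (1 / (1 - q)) ^ n * ∑ l ∈ range (n + 1), (n.choose l : ℝ) * (-1) ^ l *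
        q ^ ((w₁ * w₂ * l : ℝ) * x) *
          (2 / (1 + (q ^ l) ^ w₁) * ∑ t ∈ range w₁, (-(q ^ l) ^ w₂) ^ t) ^ r := by
  set c : ℕ → ℝ := fun l => (-1) ^ l * q ^ ((w₁ * l : ℝ) * (w₂ * x)) * (2 / (1 + (q ^ l) ^ w₁)) ^ r
  calc _ = ∑ i ∈ range (n + 1), (n.choose i : ℝ) * (qNum q w₂ ^ i * T (q ^ w₂) r n i w₁) *
        (qNum q w₁ ^ (n - i) * qEuler (q ^ w₁) r (n - i) (w₂ * x)) :=
        sum_congr rfl fun i _ => by ring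
    _ = ∑ i ∈ range (n + 1), (1 / (1 - q)) ^ n *
          ∑ j ∈ Fintype.piFinset (fun _ : Fin r => range w₁), (-1) ^ (∑ t, j t) *
            ((n.choose i : ℝ) * (1 - q ^ (w₂ * ∑ t, j t)) ^ i * (q ^ (w₂ * ∑ t, j t)) ^ (n - i) *
              ∑ l ∈ range (n + 1), ((n - i).choose l : ℝ) * c l) := by
        refine sum_congr rfl fun i hi => ?_
        rw [qNum_pow_mul_T h₂, qNum_pow_mul_qEuler hq h₁ r (Nat.sub_le n i),
          ← pow_mul_pow_sub _ (Nat.lt_succ_iff.1 (mem_range.1 hi))]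
        simp only [mul_sum, sum_mul]
        rw [sum_comm]
        exact sum_congr rfl fun j _ => sum_congr rfl fun l _ => by ring
    _ = (1 / (1 - q)) ^ n * ∑ j ∈ Fintype.piFinset (fun _ : Fin r => range w₁), (-1) ^ (∑ t, j t) *
          ∑ i ∈ range (n + 1), (n.choose i : ℝ) * (1 - q ^ (w₂ * ∑ t, j t)) ^ i *
            (q ^ (w₂ * ∑ t, j t)) ^ (n - i) *
              ∑ l ∈ range (n + 1), ((n - i).choose l : ℝ) * c l := by
        rw [← mul_sum, sum_comm]
        simp only [← mul_sum]
    _ = _ := by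
        simp_rw [sum_choose_pow_mul_sum_choose, sum_piFinset_mul_sum_choose_pow, c, mul_pow]
        refine congrArg _ (sum_congr rfl fun l _ => ?_)
        ring_nf

theorem two_div_one_add_pow_mul_geom_sum_comm {a : ℝ} (ha : 0 ≤ a) {w₁ w₂ : ℕ} (h₁ : Odd w₁)
    (h₂ : Odd w₂) :
    2 / (1 + a ^ w₁) * ∑ t ∈ range w₁, (-a ^ w₂) ^ t =
      2 / (1 + a ^ w₂) * ∑ t ∈ range w₂, (-a ^ w₁) ^ t := by
  have h₁' := h₁.geom_sum_neg_mul (a ^ w₂)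
  have h₂' := h₂.geom_sum_neg_mul (a ^ w₁)
  rw [← pow_mul] at h₁' h₂'
  rw [eq_div_of_mul_eq (by positivity) h₁', eq_div_of_mul_eq (by positivity) h₂', mul_comm w₂ w₁]
  ring

theorem qEuler_T_symmetry_general (q : ℝ) (hq0 : 0 < q) (hq1 : q < 1)
    (r : ℕ) (n : ℕ) (w₁ w₂ : ℕ) (hw₁ : Odd w₁) (hw₂ : Odd w₂)
    (x : ℝ) :
    ∑ i ∈ Finset.range (n + 1),
        (n.choose i : ℝ) * qNum q (w₁ : ℝ) ^ (n - i) * qNum q (w₂ : ℝ) ^ i *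
          T (q ^ w₂) r n i w₁ * qEuler (q ^ w₁) r (n - i) ((w₂ : ℝ) * x) =
      ∑ i ∈ Finset.range (n + 1),
        (n.choose i : ℝ) * qNum q (w₁ : ℝ) ^ i * qNum q (w₂ : ℝ) ^ (n - i) *
          T (q ^ w₁) r n i w₂ * qEuler (q ^ w₂) r (n - i) ((w₁ : ℝ) * x) := by
  have hq : ∀ {w : ℕ}, Odd w → q ^ w ≠ 1 := fun hw => (pow_lt_one₀ hq0.le hq1 hw.pos.ne').ne
  rw [sum_qNum_T_qEuler hq0.le (hq hw₁) (hq hw₂)]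
  simp_rw [mul_right_comm (n.choose _ : ℝ) (qNum q w₁ ^ _)]
  rw [sum_qNum_T_qEuler hq0.le (hq hw₂) (hq hw₁)]
  refine congrArg _ (sum_congr rfl fun l _ => ?_)
  rw [two_div_one_add_pow_mul_geom_sum_comm (pow_nonneg hq0.le l) hw₁ hw₂, mul_comm (w₁ : ℝ)]

theorem qEuler_T_symmetry (q : ℝ) (hq0 : 0 < q) (hq1 : q < 1)
    (r : ℕ) (hr : 1 ≤ r) (n : ℕ) (w₁ w₂ : ℕ) (hw₁ : Odd w₁) (hw₂ : Odd w₂)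
    (hw₁0 : 0 < w₁) (hw₂0 : 0 < w₂) (x : ℝ) :
    ∑ i ∈ Finset.range (n + 1),
        (n.choose i : ℝ) * qNum q (w₁ : ℝ) ^ (n - i) * qNum q (w₂ : ℝ) ^ i *
          T (q ^ w₂) r n i w₁ * qEuler (q ^ w₁) r (n - i) ((w₂ : ℝ) * x) =
      ∑ i ∈ Finset.range (n + 1),
        (n.choose i : ℝ) * qNum q (w₁ : ℝ) ^ i * qNum q (w₂ : ℝ) ^ (n - i) *
          T (q ^ w₁) r n i w₂ * qEuler (q ^ w₂) r (n - i) ((w₁ : ℝ) * x) :=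
  qEuler_T_symmetry_general q hq0 hq1 r n w₁ w₂ hw₁ hw₂ x
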